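/- There exists ε > 0 such that for all real X with |X| < ε, F(1/4, -5/12; 1/3; X) = (1 - (5/4)X)^(1/4) · F(1/4, -1/12; 2/3; -X^2·(4X-5)^3 / (5X-4)^3). (This is the algebraic hypergeometric transformation induced by the degree 5 Klein pull-back covering Z = -X^2(4X-5)^3/(5X-4)^3 from local exponent differences (1/2,2/3,2/3) to the standard tetrahedral equation.) -/

import Mathlib

/-!
Both sides solve, near `0`, the hypergeometric equation
`x(1-x)y'' + (c-(a+b+1)x)y' - ab y = 0` with `(a, b, c) = (1/4, -5/12, 1/3)`: the left side
because its coefficients satisfy the usual two-term recurrence, the right side because the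
degree-5 Klein map `Z(X) = -X²(4X-5)³/(5X-4)³` and the factor `(1 - 5X/4)^(1/4)` carry the
equation with parameters `(1/4, -1/12, 2/3)` into it (two rational identities in `X`).
For two solutions that are twice differentiable near `0`, the Wronskian `W` satisfies
`x(1-x)W' = -(c-(a+b+1)x)W`, so `|x|^c (1-x)^(a+b+1-c) W` is locally constant; as `c > 0` it
vanishes at `0`, hence `W = 0`, the ratio of the solutions is constant, and both sides equal `1`
at `X = 0`.
-/

/-- The Gauss hypergeometric series `F(a,b;c;z) = ∑ ((a)_n (b)_n / ((c)_n n!)) z^n`,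
where `(q)_n` is the rising (Pochhammer) factorial. -/
noncomputable def hypgeo (a b c z : ℝ) : ℝ :=
  ∑' n : ℕ, ((∏ i ∈ Finset.range n, (a + i)) * (∏ i ∈ Finset.range n, (b + i)) /
    ((∏ i ∈ Finset.range n, (c + i)) * (Nat.factorial n))) * z ^ n

open Filter Topology

noncomputable def derivCoeff (q : ℕ → ℝ) (n : ℕ) : ℝ := (n + 1) * q (n + 1)

theorem derivCoeff_const_mul (t : ℝ) (q : ℕ → ℝ) :
    derivCoeff (fun n => t * q n) = fun n => t * derivCoeff q n := by
  funext n
  simp only [derivCoeff]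
  ring

section PowerSeries

variable {q : ℕ → ℝ} {K x : ℝ}

theorem summable_mul_pow_of_abs_le_pow (hq : ∀ n, |q n| ≤ K ^ n) (hx : K * |x| < 1) :
    Summable fun n => q n * x ^ n := by
  have hK : 0 ≤ K := (abs_nonneg _).trans (by simpa using hq 1)
  refine .of_norm_bounded (summable_geometric_of_lt_one (by positivity) hx) fun n => ?_
  rw [Real.norm_eq_abs, abs_mul, abs_pow, mul_pow]
  exact mul_le_mul_of_nonneg_right (hq n) (by positivity)

theorem hasDerivAt_tsum_mul_pow (hq : ∀ n, |q n| ≤ K ^ n) (hK : 0 < K)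
    (hx : x ∈ Metric.ball (0 : ℝ) (1 / (2 * K))) :
    HasDerivAt (fun y => ∑' n, q n * y ^ n) (∑' n, derivCoeff q n * x ^ n) x := by
  have hbound : ∀ n, ∀ y ∈ Metric.ball (0 : ℝ) (1 / (2 * K)),
      ‖q n * (n * y ^ (n - 1))‖ ≤ 2 * K * (n * (1 / 2) ^ n) := by
    intro n y hy
    rw [mem_ball_zero_iff, Real.norm_eq_abs] at hy
    rcases n with _ | m
    · simp
    have hym : |y| ^ m ≤ (1 / (2 * K)) ^ m := pow_le_pow_left₀ (abs_nonneg y) hy.le m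
    calc ‖q (m + 1) * ((m + 1 : ℕ) * y ^ m)‖ = |q (m + 1)| * ((m + 1) * |y| ^ m) := by
          rw [Real.norm_eq_abs, abs_mul, abs_mul, abs_pow, Nat.abs_cast]; push_cast; ring
      _ ≤ K ^ (m + 1) * ((m + 1) * (1 / (2 * K)) ^ m) := by gcongr; exact hq _
      _ = K * (m + 1) * (K * (1 / (2 * K))) ^ m := by ring
      _ = 2 * K * ((m + 1 : ℕ) * (1 / 2) ^ (m + 1)) := by
          rw [show K * (1 / (2 * K)) = 1 / 2 by field_simp]; push_cast; ring
  have hu : Summable fun n : ℕ => 2 * K * (n * (1 / 2 : ℝ) ^ n) :=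
    ((hasSum_coe_mul_geometric_of_norm_lt_one (by norm_num : ‖(1 / 2 : ℝ)‖ < 1)).summable).mul_left _
  have hsum₀ : Summable fun n => q n * (0 : ℝ) ^ n :=
    summable_mul_pow_of_abs_le_pow hq (by simp)
  have hD := hasDerivAt_tsum_of_isPreconnected hu Metric.isOpen_ball
    (convex_ball (0 : ℝ) _).isPreconnected (fun n y _ => (hasDerivAt_pow n y).const_mul (q n))
    hbound (Metric.mem_ball_self (by positivity)) hsum₀ hx
  refine hD.congr_deriv ?_
  rw [(Summable.of_norm_bounded hu fun n => hbound n x hx).tsum_eq_zero_add]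
  simp [derivCoeff, mul_comm, mul_left_comm]

theorem eventually_hasDerivAt_tsum_mul_pow (hq : ∀ n, |q n| ≤ K ^ n) (hK : 0 < K) :
    ∀ᶠ x in 𝓝 0, HasDerivAt (fun y => ∑' n, q n * y ^ n) (∑' n, derivCoeff q n * x ^ n) x := by
  filter_upwards [Metric.ball_mem_nhds (0 : ℝ) (by positivity : 0 < 1 / (2 * K))] with x hx
  exact hasDerivAt_tsum_mul_pow hq hK hx

theorem hasSum_mul_pow_of_hasSum_succ {p : ℕ → ℝ} {S : ℝ} (hp : p 0 = 0)
    (h : HasSum (fun n => p (n + 1) * x ^ n) S) : HasSum (fun n => p n * x ^ n) (x * S) := by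
  refine (hasSum_nat_add_iff' 1).mp ?_
  simpa [hp, pow_succ, mul_comm, mul_left_comm, mul_assoc] using h.mul_left x

theorem ode_of_hasSum_of_recurrence {a b c S₀ S₁ S₂ : ℝ}
    (hq : ∀ n : ℕ, (n + 1) * (n + c) * q (n + 1) = (n + a) * (n + b) * q n)
    (h₀ : HasSum (fun n => q n * x ^ n) S₀)
    (h₁ : HasSum (fun n => derivCoeff q n * x ^ n) S₁)
    (h₂ : HasSum (fun n => derivCoeff (derivCoeff q) n * x ^ n) S₂) :
    x * (1 - x) * S₂ + (c - (a + b + 1) * x) * S₁ - a * b * S₀ = 0 := by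
  have e₁ : HasSum (fun n => (n * q n) * x ^ n) (x * S₁) :=
    hasSum_mul_pow_of_hasSum_succ (by simp) (by simpa [derivCoeff] using h₁)
  have e₂ : HasSum (fun n => (n * derivCoeff q n) * x ^ n) (x * S₂) :=
    hasSum_mul_pow_of_hasSum_succ (by simp) (by simpa [derivCoeff] using h₂)
  have e₃ : HasSum (fun n => ((n - 1) * n * q n) * x ^ n) (x * (x * S₂)) :=
    hasSum_mul_pow_of_hasSum_succ (by simp) (by simpa [derivCoeff, mul_assoc] using e₂)
  have hsum := (e₂.add (h₁.mul_left c)).sub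
    (e₃.add ((e₁.mul_left (a + b + 1)).add (h₀.mul_left (a * b))))
  have h := hsum.unique (hasSum_zero.congr_fun fun n => ?_)
  · linear_combination h
  · simp only [derivCoeff]
    linear_combination x ^ n * hq n

end PowerSeries

noncomputable def hypCoeff (a b c : ℝ) (n : ℕ) : ℝ :=
  (∏ i ∈ Finset.range n, (a + i)) * (∏ i ∈ Finset.range n, (b + i)) /
    ((∏ i ∈ Finset.range n, (c + i)) * (Nat.factorial n))

section Hypergeometric

variable {a b c : ℝ}

theorem hypgeo_eq_tsum (z : ℝ) : hypgeo a b c z = ∑' n, hypCoeff a b c n * z ^ n := rfl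

theorem hypgeo_zero : hypgeo a b c 0 = 1 := by
  rw [hypgeo_eq_tsum, tsum_eq_single 0 fun n hn => by simp [zero_pow hn]]
  simp [hypCoeff]

theorem hypCoeff_succ (hc : 0 < c) (n : ℕ) :
    (n + 1) * (n + c) * hypCoeff a b c (n + 1) = (n + a) * (n + b) * hypCoeff a b c n := by
  have hP : ∏ i ∈ Finset.range n, (c + i) ≠ 0 :=
    Finset.prod_ne_zero_iff.mpr fun i _ => by positivity
  have hcn : (n : ℝ) + c ≠ 0 := by positivity
  simp only [hypCoeff, Finset.prod_range_succ, Nat.factorial_succ, Nat.cast_mul, Nat.cast_succ]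
  field_simp
  ring

theorem derivCoeff_hypCoeff (hc : 0 < c) :
    derivCoeff (hypCoeff a b c) = fun n => a * b / c * hypCoeff (a + 1) (b + 1) (c + 1) n := by
  funext n
  have hshift : ∀ t : ℝ, ∏ i ∈ Finset.range (n + 1), (t + i) =
      t * ∏ i ∈ Finset.range n, (t + 1 + i) := fun t => by
    rw [Finset.prod_range_succ']
    simp only [Nat.cast_succ, Nat.cast_zero, add_zero]
    rw [mul_comm]; congr 1; exact Finset.prod_congr rfl fun i _ => by ring
  have hP : ∏ i ∈ Finset.range n, (c + 1 + i) ≠ 0 :=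
    Finset.prod_ne_zero_iff.mpr fun i _ => by positivity
  simp only [derivCoeff, hypCoeff, hshift, Nat.factorial_succ, Nat.cast_mul, Nat.cast_succ]
  field_simp

theorem abs_add_mul_add_le (hc : 0 < c) (n : ℕ) :
    |(n + a) * (n + b)| ≤ (|a| + 1) * (|b| + 1) / min c 1 * ((n + 1) * (n + c)) := by
  have hm : 0 < min c 1 := lt_min hc one_pos
  have hn : (0 : ℝ) ≤ n := n.cast_nonneg
  have hlin : ∀ t : ℝ, |n + t| ≤ (|t| + 1) * (n + 1) := fun t => by
    have := abs_add_le (n : ℝ) t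
    rw [Nat.abs_cast] at this
    nlinarith [abs_nonneg t]
  have hden : min c 1 * (n + 1) ≤ n + c := by nlinarith [min_le_left c 1, min_le_right c 1]
  calc |(n + a) * (n + b)| = |n + a| * |n + b| := abs_mul _ _
    _ ≤ ((|a| + 1) * (n + 1)) * ((|b| + 1) * (n + 1)) :=
        mul_le_mul (hlin a) (hlin b) (abs_nonneg _) (by positivity)
    _ = (|a| + 1) * (|b| + 1) / min c 1 * ((n + 1) * (min c 1 * (n + 1))) := by field_simp
    _ ≤ (|a| + 1) * (|b| + 1) / min c 1 * ((n + 1) * (n + c)) := by gcongr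

theorem abs_hypCoeff_le (hc : 0 < c) (n : ℕ) :
    |hypCoeff a b c n| ≤ ((|a| + 1) * (|b| + 1) / min c 1) ^ n := by
  induction n with
  | zero => simp [hypCoeff]
  | succ n ih =>
    have hpos : (0 : ℝ) < (n + 1) * (n + c) := by positivity
    have hrec := congrArg abs (hypCoeff_succ (a := a) (b := b) hc n)
    rw [abs_mul, abs_of_pos hpos, abs_mul] at hrec
    refine le_of_mul_le_mul_left ?_ hpos
    calc (n + 1) * (n + c) * |hypCoeff a b c (n + 1)|
        = |(n + a) * (n + b)| * |hypCoeff a b c n| := hrec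
      _ ≤ (|a| + 1) * (|b| + 1) / min c 1 * ((n + 1) * (n + c)) *
            ((|a| + 1) * (|b| + 1) / min c 1) ^ n :=
          mul_le_mul (abs_add_mul_add_le hc n) ih (abs_nonneg _) (by positivity)
      _ = (n + 1) * (n + c) * ((|a| + 1) * (|b| + 1) / min c 1) ^ (n + 1) := by ring

end Hypergeometric

section HypergeometricODE

variable {a b c : ℝ}

theorem eventually_summable_hypCoeff (hc : 0 < c) :
    ∀ᶠ z in 𝓝 0, Summable fun n => hypCoeff a b c n * z ^ n := by
  have hlim : Tendsto (fun z : ℝ => (|a| + 1) * (|b| + 1) / min c 1 * |z|) (𝓝 0) (𝓝 0) :=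
    (by fun_prop : Continuous fun z : ℝ => (|a| + 1) * (|b| + 1) / min c 1 * |z|).tendsto' 0 0
      (by simp)
  filter_upwards [hlim.eventually (eventually_lt_nhds one_pos)] with z hz
  exact summable_mul_pow_of_abs_le_pow (abs_hypCoeff_le hc) hz

theorem eventually_hasDerivAt_hypgeo (hc : 0 < c) :
    ∀ᶠ z in 𝓝 0, HasDerivAt (hypgeo a b c) (a * b / c * hypgeo (a + 1) (b + 1) (c + 1) z) z := by
  have hK : 0 < (|a| + 1) * (|b| + 1) / min c 1 := by
    have := lt_min hc one_pos
    positivity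
  filter_upwards [eventually_hasDerivAt_tsum_mul_pow (abs_hypCoeff_le hc) hK] with z hz
  simp only [derivCoeff_hypCoeff hc, mul_assoc, tsum_mul_left] at hz
  exact hz

theorem eventually_hasDerivAt_hypgeo_two (hc : 0 < c) : ∀ᶠ z in 𝓝 0,
    HasDerivAt (hypgeo a b c) (a * b / c * hypgeo (a + 1) (b + 1) (c + 1) z) z ∧
      HasDerivAt (fun z => a * b / c * hypgeo (a + 1) (b + 1) (c + 1) z)
        (a * b / c * ((a + 1) * (b + 1) / (c + 1) *
          hypgeo (a + 1 + 1) (b + 1 + 1) (c + 1 + 1) z)) z := by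
  filter_upwards [eventually_hasDerivAt_hypgeo hc,
    eventually_hasDerivAt_hypgeo (a := a + 1) (b := b + 1) (by linarith : 0 < c + 1)] with z h₀ h₁
  exact ⟨h₀, h₁.const_mul _⟩

theorem eventually_hypgeo_ode (hc : 0 < c) :
    ∀ᶠ z in 𝓝 0, z * (1 - z) * (a * b / c * ((a + 1) * (b + 1) / (c + 1) *
        hypgeo (a + 1 + 1) (b + 1 + 1) (c + 1 + 1) z)) +
      (c - (a + b + 1) * z) * (a * b / c * hypgeo (a + 1) (b + 1) (c + 1) z) -
      a * b * hypgeo a b c z = 0 := by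
  have hc₁ : 0 < c + 1 := by linarith
  filter_upwards [eventually_summable_hypCoeff (a := a) (b := b) hc,
    eventually_summable_hypCoeff (a := a + 1) (b := b + 1) hc₁,
    eventually_summable_hypCoeff (a := a + 1 + 1) (b := b + 1 + 1) (by linarith : 0 < c + 1 + 1)]
    with z h₀ h₁ h₂
  refine ode_of_hasSum_of_recurrence (hypCoeff_succ hc) h₀.hasSum ?_ ?_
  · simp only [derivCoeff_hypCoeff hc, mul_assoc]
    exact h₁.hasSum.mul_left _
  · simp only [derivCoeff_hypCoeff hc, derivCoeff_const_mul, derivCoeff_hypCoeff hc₁, mul_assoc]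
    exact (h₂.hasSum.mul_left _).mul_left _

end HypergeometricODE

theorem eventually_eq_of_hasDerivAt_zero {k : ℝ → ℝ} {x₀ : ℝ} (hk : ContinuousAt k x₀)
    (hd : ∀ᶠ x in 𝓝[≠] x₀, HasDerivAt k 0 x) : ∀ᶠ x in 𝓝 x₀, k x = k x₀ := by
  obtain ⟨ε, hε, hball⟩ := Metric.eventually_nhds_iff_ball.mp (eventually_nhdsWithin_iff.mp hd)
  have hcont : ∀ y ∈ Metric.ball x₀ ε, ContinuousAt k y := fun y hy => by
    rcases eq_or_ne y x₀ with rfl | hne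
    · exact hk
    · exact (hball y hy hne).continuousAt
  have hside : ∀ p q, p < q → p ∈ Metric.ball x₀ ε → q ∈ Metric.ball x₀ ε →
      x₀ ∉ Set.Ioo p q → k p = k q := by
    intro p q hpq hp hq hx₀
    have hsub : Set.Icc p q ⊆ Metric.ball x₀ ε := by
      rw [Real.ball_eq_Ioo] at hp hq ⊢
      exact Set.ordConnected_Ioo.out hp hq
    obtain ⟨r, hr, hslope⟩ := exists_hasDerivAt_eq_slope k (fun _ => 0) hpq
      (fun y hy => (hcont y (hsub hy)).continuousWithinAt)
      (fun y hy => hball y (hsub (Set.Ioo_subset_Icc_self hy)) (by rintro rfl; exact hx₀ hy))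
    rw [eq_comm, div_eq_zero_iff, sub_eq_zero] at hslope
    exact (hslope.resolve_right (sub_ne_zero.mpr hpq.ne')).symm
  filter_upwards [Metric.ball_mem_nhds x₀ hε] with x hx
  rcases lt_trichotomy x x₀ with hlt | rfl | hgt
  · exact hside x x₀ hlt hx (Metric.mem_ball_self hε) fun h => h.2.false
  · rfl
  · exact (hside x₀ x hgt (Metric.mem_ball_self hε) hx fun h => h.1.false).symm

section HypergeometricUniqueness

variable {a b c : ℝ} {f f' f'' g g' g'' : ℝ → ℝ}

theorem hasDerivAt_hypergeometric_weight {x : ℝ} (hx : x ≠ 0) (hx₁ : x < 1) :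
    HasDerivAt (fun y : ℝ => (y ^ 2) ^ (c / 2) * (1 - y) ^ (a + b + 1 - c))
      ((x ^ 2) ^ (c / 2) * (1 - x) ^ (a + b + 1 - c) * ((c - (a + b + 1) * x) / (x * (1 - x))))
      x := by
  have h₁ : 0 < 1 - x := by linarith
  have hA := (hasDerivAt_pow 2 x).rpow_const (p := c / 2) (Or.inl (by positivity))
  have hB := ((hasDerivAt_id x).const_sub 1).rpow_const (p := a + b + 1 - c) (Or.inl h₁.ne')
  refine (hA.mul hB).congr_deriv ?_
  simp only [id]
  rw [Real.rpow_sub_one (by positivity), Real.rpow_sub_one h₁.ne']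
  field_simp
  ring

theorem eventually_wronskian_eq_zero (hc : 0 < c)
    (hf : ∀ᶠ x in 𝓝 0, HasDerivAt f (f' x) x ∧ HasDerivAt f' (f'' x) x)
    (hg : ∀ᶠ x in 𝓝 0, HasDerivAt g (g' x) x ∧ HasDerivAt g' (g'' x) x)
    (hfode : ∀ᶠ x in 𝓝[≠] 0, x * (1 - x) * f'' x + (c - (a + b + 1) * x) * f' x - a * b * f x = 0)
    (hgode : ∀ᶠ x in 𝓝[≠] 0, x * (1 - x) * g'' x + (c - (a + b + 1) * x) * g' x - a * b * g x = 0) :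
    ∀ᶠ x in 𝓝[≠] 0, f x * g' x - f' x * g x = 0 := by
  -- `φ` is an integrating factor of `x(1-x)W' = -(c-(a+b+1)x)W`, and `φ 0 = 0` since `c > 0`.
  set φ : ℝ → ℝ := fun y => (y ^ 2) ^ (c / 2) * (1 - y) ^ (a + b + 1 - c)
  set W : ℝ → ℝ := fun y => f y * g' y - f' y * g y
  have hW : ∀ᶠ x in 𝓝 0, HasDerivAt W (f x * g'' x - f'' x * g x) x := by
    filter_upwards [hf, hg] with x hfx hgx
    exact ((hfx.1.mul hgx.2).sub (hfx.2.mul hgx.1)).congr_deriv (by ring)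
  have hlt : ∀ᶠ x in 𝓝 (0 : ℝ), x < 1 := eventually_lt_nhds one_pos
  have hk : ∀ᶠ x in 𝓝[≠] 0, HasDerivAt (fun y => φ y * W y) 0 x := by
    filter_upwards [nhdsWithin_le_nhds hW, nhdsWithin_le_nhds hlt, hfode, hgode,
      self_mem_nhdsWithin] with x hWx hx₁ hfx hgx hx₀
    refine ((hasDerivAt_hypergeometric_weight hx₀ hx₁).mul hWx).congr_deriv ?_
    have h₀ : x ≠ 0 := hx₀
    have h₁ : 1 - x ≠ 0 := by linarith
    field_simp
    linear_combination (φ x) * (f x * hgx - g x * hfx)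
  have hk₀ : ContinuousAt (fun y => φ y * W y) 0 := by
    refine ContinuousAt.mul ?_ hW.self_of_nhds.continuousAt
    exact ((continuous_pow 2).continuousAt.rpow_const (Or.inr (by positivity))).mul
      ((continuous_const.sub continuous_id).continuousAt.rpow_const (Or.inl (by norm_num)))
  have hφ₀ : φ 0 = 0 := by simp [φ, Real.zero_rpow (by positivity : c / 2 ≠ 0)]
  filter_upwards [nhdsWithin_le_nhds (eventually_eq_of_hasDerivAt_zero hk₀ hk),
    nhdsWithin_le_nhds hlt, self_mem_nhdsWithin] with x hx hx₁ hx₀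
  have h₀ : x ≠ 0 := hx₀
  have hφ : φ x ≠ 0 := mul_ne_zero (Real.rpow_pos_of_pos (by positivity) _).ne'
    (Real.rpow_pos_of_pos (by linarith) _).ne'
  simpa [hφ₀, hφ] using hx


theorem eventually_eq_of_hypergeometric_ode (hc : 0 < c)
    (hf : ∀ᶠ x in 𝓝 0, HasDerivAt f (f' x) x ∧ HasDerivAt f' (f'' x) x)
    (hg : ∀ᶠ x in 𝓝 0, HasDerivAt g (g' x) x ∧ HasDerivAt g' (g'' x) x)
    (hfode : ∀ᶠ x in 𝓝[≠] 0, x * (1 - x) * f'' x + (c - (a + b + 1) * x) * f' x - a * b * f x = 0)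
    (hgode : ∀ᶠ x in 𝓝[≠] 0, x * (1 - x) * g'' x + (c - (a + b + 1) * x) * g' x - a * b * g x = 0)
    (hf₀ : f 0 ≠ 0) (hgf₀ : g 0 = f 0) :
    ∀ᶠ x in 𝓝 0, g x = f x := by
  have hfc : ContinuousAt f 0 := hf.self_of_nhds.1.continuousAt
  have hne : ∀ᶠ x in 𝓝 0, f x ≠ 0 := hfc.eventually_ne hf₀
  have hratio : ∀ᶠ x in 𝓝[≠] 0, HasDerivAt (fun y => g y / f y) 0 x := by
    filter_upwards [nhdsWithin_le_nhds hf, nhdsWithin_le_nhds hg, nhdsWithin_le_nhds hne,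
      eventually_wronskian_eq_zero hc hf hg hfode hgode] with x hfx hgx hx hW
    refine (hgx.1.div hfx.1 hx).congr_deriv ?_
    rw [div_eq_zero_iff]
    left
    linear_combination hW
  have hconst := eventually_eq_of_hasDerivAt_zero
    (hg.self_of_nhds.1.continuousAt.div hfc hf₀) hratio
  filter_upwards [hconst, hne] with x hx hfx
  rwa [Pi.div_apply, Pi.div_apply, hgf₀, div_self hf₀, div_eq_one_iff_eq hfx] at hx

end HypergeometricUniqueness

noncomputable def kleinCover (X : ℝ) : ℝ := -(X ^ 2 * (4 * X - 5) ^ 3) / (5 * X - 4) ^ 3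

noncomputable def kleinCover' (X : ℝ) : ℝ :=
  -5 * X * (4 * X - 5) ^ 2 * (8 * X ^ 2 - 11 * X + 8) / (5 * X - 4) ^ 4

noncomputable def kleinCover'' (X : ℝ) : ℝ :=
  -10 * (4 * X - 5) * (80 * X ^ 4 - 220 * X ^ 3 + 237 * X ^ 2 - 112 * X + 80) / (5 * X - 4) ^ 5

noncomputable def kleinFactor (X : ℝ) : ℝ := (1 - (5 / 4) * X) ^ ((1 : ℝ) / 4)

noncomputable def kleinFactor' (X : ℝ) : ℝ := 5 / (4 * (5 * X - 4)) * kleinFactor X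

noncomputable def kleinFactor'' (X : ℝ) : ℝ := -75 / (16 * (5 * X - 4) ^ 2) * kleinFactor X

section KleinCover

variable {X : ℝ}

theorem hasDerivAt_mul_sub (p q X : ℝ) : HasDerivAt (fun Y : ℝ => p * Y - q) p X := by
  simpa using ((hasDerivAt_id X).const_mul p).sub_const q

theorem hasDerivAt_kleinCover (hX : 5 * X - 4 ≠ 0) : HasDerivAt kleinCover (kleinCover' X) X := by
  have hl := fun p q => hasDerivAt_mul_sub p q X
  have h := (((hasDerivAt_pow 2 X).fun_mul ((hl 4 5).fun_pow 3)).fun_neg).fun_div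
    ((hl 5 4).fun_pow 3) (pow_ne_zero 3 hX)
  refine HasDerivAt.congr_deriv (f := kleinCover) h ?_
  rw [kleinCover', div_eq_div_iff (pow_ne_zero _ (pow_ne_zero _ hX)) (pow_ne_zero _ hX)]
  norm_num
  ring

theorem hasDerivAt_kleinCover' (hX : 5 * X - 4 ≠ 0) : HasDerivAt kleinCover' (kleinCover'' X) X := by
  have hl := fun p q => hasDerivAt_mul_sub p q X
  have hP : HasDerivAt (fun Y : ℝ => 8 * Y ^ 2 - 11 * Y + 8) (16 * X - 11) X := by
    refine ((((hasDerivAt_pow 2 X).const_mul 8).sub ((hasDerivAt_id X).const_mul 11)).add_const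
      8).congr_deriv ?_
    push_cast
    ring
  have h := ((((hasDerivAt_id' X).const_mul (-5)).fun_mul ((hl 4 5).fun_pow 2)).fun_mul hP).fun_div
    ((hl 5 4).fun_pow 4) (pow_ne_zero 4 hX)
  refine HasDerivAt.congr_deriv (f := kleinCover') h ?_
  rw [kleinCover'', div_eq_div_iff (pow_ne_zero _ (pow_ne_zero _ hX)) (pow_ne_zero _ hX)]
  norm_num
  ring

end KleinCover

section KleinFactor

variable {X : ℝ}

theorem hasDerivAt_kleinFactor (hX : 5 * X - 4 ≠ 0) :
    HasDerivAt kleinFactor (kleinFactor' X) X := by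
  have hu : 1 - 5 / 4 * X ≠ 0 := fun h => hX (by linarith)
  refine ((((hasDerivAt_id' X).const_mul (5 / 4)).const_sub 1).rpow_const
    (p := 1 / 4) (Or.inl hu)).congr_deriv ?_
  rw [kleinFactor', kleinFactor, Real.rpow_sub_one hu,
    show 5 * X - 4 = -4 * (1 - 5 / 4 * X) by ring]
  field_simp

theorem hasDerivAt_kleinFactor' (hX : 5 * X - 4 ≠ 0) :
    HasDerivAt kleinFactor' (kleinFactor'' X) X := by
  have h := (hasDerivAt_const X (5 : ℝ)).fun_div ((hasDerivAt_mul_sub 5 4 X).const_mul 4)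
    (mul_ne_zero four_ne_zero hX)
  refine (h.fun_mul (hasDerivAt_kleinFactor hX)).congr_deriv ?_
  rw [kleinFactor'', kleinFactor']
  field_simp
  ring

end KleinFactor

theorem kleinPullback_ode {X g g₁ g₂ : ℝ} (hX : 5 * X - 4 ≠ 0)
    (hZ : kleinCover X * (1 - kleinCover X) ≠ 0)
    (hG : kleinCover X * (1 - kleinCover X) * g₂ +
      (2 / 3 - (1 / 4 + -1 / 12 + 1) * kleinCover X) * g₁ - 1 / 4 * (-1 / 12) * g = 0) :
    X * (1 - X) * (kleinFactor'' X * g + 2 * kleinFactor' X * (g₁ * kleinCover' X) +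
        kleinFactor X * (g₂ * kleinCover' X ^ 2 + g₁ * kleinCover'' X)) +
      (1 / 3 - (1 / 4 + -5 / 12 + 1) * X) *
        (kleinFactor' X * g + kleinFactor X * (g₁ * kleinCover' X)) -
      1 / 4 * (-5 / 12) * (kleinFactor X * g) = 0 := by
  -- the form in which `field_simp` looks for the pole
  have hX' : X * 5 - 4 ≠ 0 := by rwa [mul_comm]
  set Z := kleinCover X
  set Z₁ := kleinCover' X
  set Z₂ := kleinCover'' X
  set ρ₁ := 5 / (4 * (5 * X - 4))
  set ρ₂ := -75 / (16 * (5 * X - 4) ^ 2)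
  -- `ρ₁ = kleinFactor' / kleinFactor`, `ρ₂ = kleinFactor'' / kleinFactor`. Once `g₂` is eliminated
  -- with `hG`, `Z(1-Z)` times the left side is `kleinFactor X * (h₁ g + h₂ g₁)`.
  have h₁ : Z * (1 - Z) * (X * (1 - X) * ρ₂ + (1 / 3 - 5 / 6 * X) * ρ₁ + 5 / 48) -
      1 / 48 * X * (1 - X) * Z₁ ^ 2 = 0 := by
    simp only [Z, Z₁, ρ₁, ρ₂, kleinCover, kleinCover']
    field_simp
    ring
  have h₂ : Z * (1 - Z) * (X * (1 - X) * (2 * ρ₁ * Z₁ + Z₂) + (1 / 3 - 5 / 6 * X) * Z₁) -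
      X * (1 - X) * Z₁ ^ 2 * (2 / 3 - 7 / 6 * Z) = 0 := by
    simp only [Z, Z₁, Z₂, ρ₁, kleinCover, kleinCover', kleinCover'']
    field_simp
    ring
  refine (mul_right_inj' hZ).mp ?_
  simp only [kleinFactor', kleinFactor'']
  linear_combination kleinFactor X * (g * h₁ + g₁ * h₂ + X * (1 - X) * Z₁ ^ 2 * hG)

theorem tendsto_kleinCover : Tendsto kleinCover (𝓝 0) (𝓝 0) := by
  simpa [kleinCover] using (hasDerivAt_kleinCover (X := 0) (by norm_num)).continuousAt.tendsto

theorem eventually_mul_sub_ne_zero {p q : ℝ} (hq : q ≠ 0) : ∀ᶠ X in 𝓝 (0 : ℝ), p * X - q ≠ 0 :=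
  (by fun_prop : Continuous fun X : ℝ => p * X - q).continuousAt.eventually_ne (by simpa using hq)

section KleinPullback

variable {G G' G'' : ℝ → ℝ}

theorem eventually_hasDerivAt_kleinPullback
    (hG : ∀ᶠ z in 𝓝 0, HasDerivAt G (G' z) z ∧ HasDerivAt G' (G'' z) z) :
    ∀ᶠ X in 𝓝 0,
      HasDerivAt (fun Y => kleinFactor Y * G (kleinCover Y))
        (kleinFactor' X * G (kleinCover X) + kleinFactor X * (G' (kleinCover X) * kleinCover' X)) X ∧
      HasDerivAt
        (fun Y => kleinFactor' Y * G (kleinCover Y) + kleinFactor Y * (G' (kleinCover Y) * kleinCover' Y))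
        (kleinFactor'' X * G (kleinCover X) + 2 * kleinFactor' X * (G' (kleinCover X) * kleinCover' X) +
          kleinFactor X * (G'' (kleinCover X) * kleinCover' X ^ 2 + G' (kleinCover X) * kleinCover'' X))
        X := by
  filter_upwards [eventually_mul_sub_ne_zero (p := 5) four_ne_zero,
    tendsto_kleinCover.eventually hG] with X hX hGX
  have hGZ := hGX.1.comp X (hasDerivAt_kleinCover hX)
  have hG'Z := hGX.2.comp X (hasDerivAt_kleinCover hX)
  refine ⟨(hasDerivAt_kleinFactor hX).fun_mul hGZ, ?_⟩
  refine (((hasDerivAt_kleinFactor' hX).fun_mul hGZ).add ((hasDerivAt_kleinFactor hX).fun_mul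
    (hG'Z.fun_mul (hasDerivAt_kleinCover' hX)))).congr_deriv ?_
  simp only [Function.comp_apply]
  ring

theorem eventually_kleinPullback_ode
    (hG : ∀ᶠ z in 𝓝 0, z * (1 - z) * G'' z + (2 / 3 - (1 / 4 + -1 / 12 + 1) * z) * G' z -
      1 / 4 * (-1 / 12) * G z = 0) :
    ∀ᶠ X in 𝓝[≠] 0,
      X * (1 - X) * (kleinFactor'' X * G (kleinCover X) +
          2 * kleinFactor' X * (G' (kleinCover X) * kleinCover' X) +
          kleinFactor X * (G'' (kleinCover X) * kleinCover' X ^ 2 + G' (kleinCover X) * kleinCover'' X)) +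
        (1 / 3 - (1 / 4 + -5 / 12 + 1) * X) *
          (kleinFactor' X * G (kleinCover X) + kleinFactor X * (G' (kleinCover X) * kleinCover' X)) -
        1 / 4 * (-5 / 12) * (kleinFactor X * G (kleinCover X)) = 0 := by
  filter_upwards [nhdsWithin_le_nhds (eventually_mul_sub_ne_zero (p := 5) four_ne_zero),
    nhdsWithin_le_nhds (eventually_mul_sub_ne_zero (p := 4) (by norm_num : (5 : ℝ) ≠ 0)),
    nhdsWithin_le_nhds (tendsto_kleinCover.eventually hG),
    nhdsWithin_le_nhds (tendsto_kleinCover.eventually (eventually_ne_nhds zero_ne_one)),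
    self_mem_nhdsWithin] with X h54 h45 hGX hZ₁ hX₀
  have hZ₀ : kleinCover X ≠ 0 := div_ne_zero
    (neg_ne_zero.mpr (mul_ne_zero (pow_ne_zero 2 hX₀) (pow_ne_zero 3 h45))) (pow_ne_zero 3 h54)
  exact kleinPullback_ode h54 (mul_ne_zero hZ₀ (sub_ne_zero.mpr hZ₁.symm)) hGX

end KleinPullback

theorem stmt17 : ∃ ε > 0, ∀ X : ℝ, |X| < ε →
    hypgeo (1/4) (-5/12) (1/3) X =
      (1 - (5/4) * X) ^ ((1 : ℝ)/4) *
        hypgeo (1/4) (-1/12) (2/3) (-(X^2 * (4*X - 5)^3) / (5*X - 4)^3) := by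
  have h := eventually_eq_of_hypergeometric_ode (a := 1 / 4) (b := -5 / 12) (c := 1 / 3)
    (g := fun X => kleinFactor X * hypgeo (1 / 4) (-1 / 12) (2 / 3) (kleinCover X)) (by norm_num)
    (eventually_hasDerivAt_hypgeo_two (by norm_num))
    (eventually_hasDerivAt_kleinPullback (eventually_hasDerivAt_hypgeo_two (by norm_num)))
    (nhdsWithin_le_nhds (eventually_hypgeo_ode (by norm_num)))
    (eventually_kleinPullback_ode (eventually_hypgeo_ode (by norm_num)))
    (by simp [hypgeo_zero]) (by simp [kleinFactor, kleinCover, hypgeo_zero])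
  obtain ⟨ε, hε, hball⟩ := Metric.eventually_nhds_iff.mp h
  exact ⟨ε, hε, fun X hX => (hball (by rwa [Real.dist_0_eq_abs])).symm⟩
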